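/- arXiv:1007.0673 — 8 statements merged into one kernel-verified Lean document; each statement's English description precedes it below -/
import Mathlib

section
/- Let Φ = (φ_n) and Ψ = (ψ_n) be Bessel sequences for a complex Hilbert space H with bounds B_Φ and B_Ψ, and let m : ℕ → ℂ be a bounded sequence. Then for every f ∈ H the family (m_n ⟨f, ψ_n⟩ φ_n)_{n∈ℕ} is unconditionally summable in H, and the map f ↦ ∑_n m_n ⟨f, ψ_n⟩ φ_n is a bounded linear operator from H to H. -/
/-!
Write `c n = m n ⟨f, ψ n⟩`. Since `m` is bounded and `Ψ` is Bessel, `c` is square-summable with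
`∑ ‖c n‖² ≤ b² B_Ψ ‖f‖²`. For a Bessel sequence `Φ`, testing `x = ∑_{n ∈ t} c n φ n` against
itself and applying Cauchy–Schwarz gives `‖x‖ ≤ √B_Φ (∑_{n ∈ t} ‖c n‖²)^{1/2}` for every finite
`t`; so the partial sums of `∑ c n φ n` satisfy the Cauchy criterion, and the sum is bounded by
`√B_Φ · |b| √B_Ψ · ‖f‖`.
-/

section Bessel

variable (𝕜 : Type*) {H ι : Type*} [RCLike 𝕜] [NormedAddCommGroup H] [InnerProductSpace 𝕜 H]

def IsBesselSeq (φ : ι → H) (B : ℝ) : Prop :=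
  ∀ h : H, Summable (fun n => ‖(inner 𝕜 (φ n) h : 𝕜)‖ ^ 2) ∧
    ∑' n, ‖(inner 𝕜 (φ n) h : 𝕜)‖ ^ 2 ≤ B * ‖h‖ ^ 2

variable {𝕜} {φ ψ : ι → H} {B BΦ BΨ : ℝ}

namespace IsBesselSeq

theorem sum_norm_inner_sq_le (hφ : IsBesselSeq 𝕜 φ B) (h : H) (t : Finset ι) :
    ∑ n ∈ t, ‖(inner 𝕜 (φ n) h : 𝕜)‖ ^ 2 ≤ B * ‖h‖ ^ 2 :=
  ((hφ h).1.sum_le_tsum t fun n _ => by positivity).trans (hφ h).2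

theorem norm_sum_smul_le (hφ : IsBesselSeq 𝕜 φ B) (c : ι → 𝕜) (t : Finset ι) :
    ‖∑ n ∈ t, c n • φ n‖ ≤ √B * √(∑ n ∈ t, ‖c n‖ ^ 2) := by
  set x := ∑ n ∈ t, c n • φ n
  rcases (norm_nonneg x).eq_or_lt with hx | hx
  · rw [← hx]
    positivity
  have hself : ‖x‖ ^ 2 ≤ ∑ n ∈ t, ‖c n‖ * ‖(inner 𝕜 (φ n) x : 𝕜)‖ := by
    calc ‖x‖ ^ 2 = ‖(inner 𝕜 x x : 𝕜)‖ := by rw [inner_self_eq_norm_sq_to_K]; simp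
      _ = ‖∑ n ∈ t, (starRingEnd 𝕜) (c n) * inner 𝕜 (φ n) x‖ := by
        simp only [x, sum_inner, inner_smul_left]
      _ ≤ ∑ n ∈ t, ‖c n‖ * ‖(inner 𝕜 (φ n) x : 𝕜)‖ := by
        refine (norm_sum_le _ _).trans_eq ?_
        simp only [norm_mul, RCLike.norm_conj]
  have hsq : ‖x‖ * ‖x‖ ≤ √B * √(∑ n ∈ t, ‖c n‖ ^ 2) * ‖x‖ := by
    calc ‖x‖ * ‖x‖ = ‖x‖ ^ 2 := by ring
      _ ≤ √(∑ n ∈ t, ‖c n‖ ^ 2) * √(∑ n ∈ t, ‖(inner 𝕜 (φ n) x : 𝕜)‖ ^ 2) :=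
        hself.trans (Real.sum_mul_le_sqrt_mul_sqrt t _ _)
      _ ≤ √(∑ n ∈ t, ‖c n‖ ^ 2) * √(B * ‖x‖ ^ 2) := by
        gcongr
        exact hφ.sum_norm_inner_sq_le x t
      _ = √B * √(∑ n ∈ t, ‖c n‖ ^ 2) * ‖x‖ := by
        rw [Real.sqrt_mul' B (sq_nonneg _), Real.sqrt_sq (norm_nonneg x)]
        ring
  exact le_of_mul_le_mul_right hsq hx

theorem summable_smul [CompleteSpace H] (hφ : IsBesselSeq 𝕜 φ B) {c : ι → 𝕜}
    (hc : Summable fun n => ‖c n‖ ^ 2) : Summable fun n => c n • φ n := by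
  rw [summable_iff_vanishing_norm]
  intro ε hε
  set δ := ε / (√B + 1)
  have hδ : 0 < δ := by positivity
  have hδε : √B * δ < ε := by
    rw [mul_div_assoc', div_lt_iff₀ (by positivity)]
    nlinarith [Real.sqrt_nonneg B]
  obtain ⟨s, hs⟩ := summable_iff_vanishing_norm.mp hc (δ ^ 2) (by positivity)
  refine ⟨s, fun t ht => ?_⟩
  have htail : √(∑ n ∈ t, ‖c n‖ ^ 2) ≤ δ := by
    rw [Real.sqrt_le_left hδ.le]
    exact (le_abs_self _).trans (hs t ht).le
  calc ‖∑ n ∈ t, c n • φ n‖ ≤ √B * √(∑ n ∈ t, ‖c n‖ ^ 2) := hφ.norm_sum_smul_le c t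
    _ ≤ √B * δ := by gcongr
    _ < ε := hδε

theorem norm_tsum_smul_le [CompleteSpace H] (hφ : IsBesselSeq 𝕜 φ B) {c : ι → 𝕜}
    (hc : Summable fun n => ‖c n‖ ^ 2) :
    ‖∑' n, c n • φ n‖ ≤ √B * √(∑' n, ‖c n‖ ^ 2) := by
  refine le_of_tendsto ((hφ.summable_smul hc).hasSum.norm) (Filter.Eventually.of_forall
    fun t => (hφ.norm_sum_smul_le c t).trans ?_)
  gcongr
  exact hc.sum_le_tsum t fun n _ => by positivity

section Analysis

variable {m : ι → 𝕜} {b : ℝ}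

theorem norm_mul_inner_sq_le (hm : ∀ n, ‖m n‖ ≤ b) (f : H) (n : ι) :
    ‖m n * inner 𝕜 (ψ n) f‖ ^ 2 ≤ b ^ 2 * ‖(inner 𝕜 (ψ n) f : 𝕜)‖ ^ 2 := by
  rw [norm_mul, mul_pow]
  gcongr
  exact hm n

theorem summable_norm_mul_inner_sq (hψ : IsBesselSeq 𝕜 ψ B) (hm : ∀ n, ‖m n‖ ≤ b) (f : H) :
    Summable fun n => ‖m n * inner 𝕜 (ψ n) f‖ ^ 2 :=
  ((hψ f).1.mul_left (b ^ 2)).of_nonneg_of_le (fun n => by positivity)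
    (norm_mul_inner_sq_le hm f)

theorem tsum_norm_mul_inner_sq_le (hψ : IsBesselSeq 𝕜 ψ B) (hm : ∀ n, ‖m n‖ ≤ b) (f : H) :
    ∑' n, ‖m n * inner 𝕜 (ψ n) f‖ ^ 2 ≤ b ^ 2 * B * ‖f‖ ^ 2 := by
  calc ∑' n, ‖m n * inner 𝕜 (ψ n) f‖ ^ 2 ≤ ∑' n, b ^ 2 * ‖(inner 𝕜 (ψ n) f : 𝕜)‖ ^ 2 :=
        (hψ.summable_norm_mul_inner_sq hm f).tsum_le_tsum (norm_mul_inner_sq_le hm f)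
          ((hψ f).1.mul_left _)
    _ ≤ b ^ 2 * (B * ‖f‖ ^ 2) := by
        rw [tsum_mul_left]
        exact mul_le_mul_of_nonneg_left (hψ f).2 (by positivity)
    _ = b ^ 2 * B * ‖f‖ ^ 2 := by ring

variable [CompleteSpace H]

-- `inner 𝕜 (ψ n) f` is the paper's `⟨f, ψ n⟩`.
noncomputable def multiplier (hφ : IsBesselSeq 𝕜 φ BΦ) (hψ : IsBesselSeq 𝕜 ψ BΨ)
    (hm : ∀ n, ‖m n‖ ≤ b) : H →L[𝕜] H :=
  LinearMap.mkContinuous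
    { toFun := fun f => ∑' n, (m n * inner 𝕜 (ψ n) f) • φ n
      map_add' := fun f g => by
        simp only [inner_add_right, mul_add, add_smul]
        exact (hφ.summable_smul (hψ.summable_norm_mul_inner_sq hm f)).tsum_add
          (hφ.summable_smul (hψ.summable_norm_mul_inner_sq hm g))
      map_smul' := fun a f => by
        rw [RingHom.id_apply,
          ← (hφ.summable_smul (hψ.summable_norm_mul_inner_sq hm f)).tsum_const_smul a]
        simp only [inner_smul_right, smul_smul, mul_left_comm (m _)] }
    (√BΦ * √(b ^ 2 * BΨ)) fun f => by
      calc ‖∑' n, (m n * inner 𝕜 (ψ n) f) • φ n‖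
          ≤ √BΦ * √(∑' n, ‖m n * inner 𝕜 (ψ n) f‖ ^ 2) :=
            hφ.norm_tsum_smul_le (hψ.summable_norm_mul_inner_sq hm f)
        _ ≤ √BΦ * √(b ^ 2 * BΨ * ‖f‖ ^ 2) := by
            gcongr
            exact hψ.tsum_norm_mul_inner_sq_le hm f
        _ = √BΦ * √(b ^ 2 * BΨ) * ‖f‖ := by
            rw [Real.sqrt_mul' _ (sq_nonneg _), Real.sqrt_sq (norm_nonneg f), mul_assoc]

theorem multiplier_apply (hφ : IsBesselSeq 𝕜 φ BΦ) (hψ : IsBesselSeq 𝕜 ψ BΨ)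
    (hm : ∀ n, ‖m n‖ ≤ b) (f : H) :
    hφ.multiplier hψ hm f = ∑' n, (m n * inner 𝕜 (ψ n) f) • φ n :=
  rfl

end Analysis

end IsBesselSeq

end Bessel

theorem stmt_0_general
    {H : Type*} [NormedAddCommGroup H] [InnerProductSpace ℂ H] [CompleteSpace H]
    (φ ψ : ℕ → H) (m : ℕ → ℂ)
    (BΦ : ℝ)
    (hΦ : ∀ h : H, Summable (fun n => ‖(inner ℂ (φ n) h : ℂ)‖ ^ 2) ∧
      ∑' n, ‖(inner ℂ (φ n) h : ℂ)‖ ^ 2 ≤ BΦ * ‖h‖ ^ 2)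
    (BΨ : ℝ)
    (hΨ : ∀ h : H, Summable (fun n => ‖(inner ℂ (ψ n) h : ℂ)‖ ^ 2) ∧
      ∑' n, ‖(inner ℂ (ψ n) h : ℂ)‖ ^ 2 ≤ BΨ * ‖h‖ ^ 2)
    (b : ℝ) (hm : ∀ n, ‖m n‖ ≤ b) :
    (∀ f : H, Summable (fun n => (m n * (inner ℂ (ψ n) f : ℂ)) • φ n)) ∧
    ∃ T : H →L[ℂ] H, ∀ f : H, T f = ∑' n, (m n * (inner ℂ (ψ n) f : ℂ)) • φ n := by
  have hΦ : IsBesselSeq ℂ φ BΦ := hΦ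
  have hΨ : IsBesselSeq ℂ ψ BΨ := hΨ
  exact ⟨fun f => hΦ.summable_smul (hΨ.summable_norm_mul_inner_sq hm f),
    hΦ.multiplier hΨ hm, hΦ.multiplier_apply hΨ hm⟩

/-- For Bessel sequences Φ, Ψ with bounds BΦ, BΨ and bounded symbol m,
the multiplier series is unconditionally summable for every f and defines a bounded
linear operator on H. (Here ⟨f, ψ_n⟩, linear in f, is Mathlib's `inner (ψ n) f`.) -/
theorem stmt_0
    {H : Type*} [NormedAddCommGroup H] [InnerProductSpace ℂ H] [CompleteSpace H]
    (φ ψ : ℕ → H) (m : ℕ → ℂ)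
    (BΦ : ℝ) (hBΦ : 0 < BΦ)
    (hΦ : ∀ h : H, Summable (fun n => ‖(inner ℂ (φ n) h : ℂ)‖ ^ 2) ∧
      ∑' n, ‖(inner ℂ (φ n) h : ℂ)‖ ^ 2 ≤ BΦ * ‖h‖ ^ 2)
    (BΨ : ℝ) (hBΨ : 0 < BΨ)
    (hΨ : ∀ h : H, Summable (fun n => ‖(inner ℂ (ψ n) h : ℂ)‖ ^ 2) ∧
      ∑' n, ‖(inner ℂ (ψ n) h : ℂ)‖ ^ 2 ≤ BΨ * ‖h‖ ^ 2)
    (b : ℝ) (hm : ∀ n, ‖m n‖ ≤ b) :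
    (∀ f : H, Summable (fun n => (m n * (inner ℂ (ψ n) f : ℂ)) • φ n)) ∧
    ∃ T : H →L[ℂ] H, ∀ f : H, T f = ∑' n, (m n * (inner ℂ (ψ n) f : ℂ)) • φ n :=
  stmt_0_general φ ψ m BΦ hΦ BΨ hΨ b hm
end

section
/- Let m : ℕ → ℂ and let Φ = (φ_n), Ψ = (ψ_n) be sequences in a complex Hilbert space H. Suppose that for every f ∈ H the family (m_n ⟨f, ψ_n⟩ φ_n)_{n∈ℕ} is unconditionally summable, or that for every f ∈ H the family (m_n ⟨f, φ_n⟩ ψ_n)_{n∈ℕ} is unconditionally summable. If Φ is norm-bounded below (inf_n ‖φ_n‖ > 0), then the sequence mΨ = (m_n ψ_n) is a Bessel sequence for H, i.e. there is B > 0 with ∑_n |m_n|² |⟨h, ψ_n⟩|² ≤ B‖h‖² for every h ∈ H. -/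
/-!
By Banach–Steinhaus, unconditional convergence of `∑ₙ Tₙ f` for every `f` makes the partial
sums `∑_{n ∈ G} Tₙ` of the rank-one operators `Tₙ = mₙ ⟨ψₙ, ·⟩ φₙ` uniformly bounded, by `K` say;
in the second case one passes to adjoints, which swaps `φ` and `ψ` and keeps the norms. In a
Hilbert space, by the parallelogram law, for every finite `F` some choice of signs gives
`∑_{n ∈ F} ‖xₙ‖² ≤ ‖∑_{n ∈ F} ±xₙ‖²`, so finite sums of `‖Tₙ h‖²` are at most `(2K‖h‖)²`.
Finally `‖Tₙ h‖ ≥ a |mₙ| |⟨ψₙ, h⟩|` when `‖φₙ‖ ≥ a`.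
-/

open scoped ComplexConjugate
open InnerProductSpace (rankOne)

theorem exists_subset_sum_norm_sq_le_norm_sum_sub_sum_sq (𝕜 : Type*) {E ι : Type*} [RCLike 𝕜]
    [NormedAddCommGroup E] [InnerProductSpace 𝕜 E] [DecidableEq ι] (x : ι → E) (F : Finset ι) :
    ∃ σ ⊆ F, ∑ n ∈ F, ‖x n‖ ^ 2 ≤ ‖∑ n ∈ σ, x n - ∑ n ∈ F \ σ, x n‖ ^ 2 := by
  induction F using Finset.induction with
  | empty => exact ⟨∅, subset_rfl, by simp⟩
  | @insert a s ha ih =>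
    obtain ⟨σ, hσs, hσ⟩ := ih
    have haσ : a ∉ σ := fun h => ha (hσs h)
    set y := ∑ n ∈ σ, x n - ∑ n ∈ s \ σ, x n with hy
    have hpar := parallelogram_law_with_norm 𝕜 y (x a)
    by_cases hle : ‖y‖ ^ 2 + ‖x a‖ ^ 2 ≤ ‖y + x a‖ ^ 2
    · refine ⟨insert a σ, Finset.insert_subset_insert a hσs, ?_⟩
      rw [Finset.insert_sdiff_insert, Finset.sdiff_insert_of_notMem ha, Finset.sum_insert ha,
        Finset.sum_insert haσ,
        show x a + ∑ n ∈ σ, x n - ∑ n ∈ s \ σ, x n = y + x a by rw [hy]; abel]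
      linarith
    · refine ⟨σ, hσs.trans (Finset.subset_insert a s), ?_⟩
      rw [Finset.insert_sdiff_of_notMem s haσ, Finset.sum_insert ha,
        Finset.sum_insert (fun h => ha (Finset.mem_sdiff.1 h).1),
        show ∑ n ∈ σ, x n - (x a + ∑ n ∈ s \ σ, x n) = y - x a by rw [hy]; abel]
      linarith

theorem sum_norm_sq_le_of_forall_norm_sum_le (𝕜 : Type*) {E ι : Type*} [RCLike 𝕜]
    [NormedAddCommGroup E] [InnerProductSpace 𝕜 E] (x : ι → E) {C : ℝ}
    (hC : ∀ G : Finset ι, ‖∑ n ∈ G, x n‖ ≤ C) (F : Finset ι) :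
    ∑ n ∈ F, ‖x n‖ ^ 2 ≤ (2 * C) ^ 2 := by
  classical
  obtain ⟨σ, -, hσ⟩ := exists_subset_sum_norm_sq_le_norm_sum_sub_sum_sq 𝕜 x F
  refine hσ.trans (pow_le_pow_left₀ (norm_nonneg _) ?_ 2)
  calc ‖∑ n ∈ σ, x n - ∑ n ∈ F \ σ, x n‖
      ≤ ‖∑ n ∈ σ, x n‖ + ‖∑ n ∈ F \ σ, x n‖ := norm_sub_le _ _
    _ ≤ 2 * C := by linarith [hC σ, hC (F \ σ)]

theorem Summable.exists_forall_norm_finset_sum_le {ι E : Type*} [SeminormedAddCommGroup E]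
    {x : ι → E} (hx : Summable x) : ∃ C, ∀ G : Finset ι, ‖∑ n ∈ G, x n‖ ≤ C := by
  classical
  obtain ⟨F₀, hF₀⟩ := hx.vanishing (Metric.ball_mem_nhds (0 : E) one_pos)
  refine ⟨∑ n ∈ F₀, ‖x n‖ + 1, fun G => ?_⟩
  have htail : ‖∑ n ∈ G \ F₀, x n‖ < 1 := by
    simpa using hF₀ (G \ F₀) Finset.sdiff_disjoint
  have hhead : ‖∑ n ∈ G ∩ F₀, x n‖ ≤ ∑ n ∈ F₀, ‖x n‖ :=
    (norm_sum_le _ _).trans (Finset.sum_le_sum_of_subset_of_nonneg Finset.inter_subset_right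
      fun _ _ _ => norm_nonneg _)
  rw [← Finset.sum_inter_add_sum_sdiff G F₀]
  linarith [norm_add_le (∑ n ∈ G ∩ F₀, x n) (∑ n ∈ G \ F₀, x n)]

theorem exists_forall_norm_finset_sum_le_of_summable_apply {ι 𝕜 E F : Type*}
    [NontriviallyNormedField 𝕜] [NormedAddCommGroup E] [NormedSpace 𝕜 E] [CompleteSpace E]
    [SeminormedAddCommGroup F] [NormedSpace 𝕜 F] {g : ι → E →L[𝕜] F}
    (hg : ∀ f, Summable fun n => g n f) : ∃ K, ∀ G : Finset ι, ‖∑ n ∈ G, g n‖ ≤ K :=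
  banach_steinhaus fun f => by
    simpa only [_root_.sum_apply] using (hg f).exists_forall_norm_finset_sum_le

section RankOne

variable {𝕜 H ι : Type*} [RCLike 𝕜] [NormedAddCommGroup H] [InnerProductSpace 𝕜 H]

theorem norm_sum_conj_smul_rankOne [CompleteSpace H] (m : ι → 𝕜) (φ ψ : ι → H)
    (G : Finset ι) :
    ‖∑ n ∈ G, conj (m n) • rankOne 𝕜 (φ n) (ψ n)‖ = ‖∑ n ∈ G, m n • rankOne 𝕜 (ψ n) (φ n)‖ := by
  rw [← ContinuousLinearMap.adjoint.norm_map]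
  simp [map_sum, map_smulₛₗ]

theorem sum_norm_sq_mul_norm_inner_sq_le {φ ψ : ι → H} {m : ι → 𝕜} {a K : ℝ} (ha : 0 < a)
    (hφ : ∀ n, a ≤ ‖φ n‖) (hK : ∀ G : Finset ι, ‖∑ n ∈ G, m n • rankOne 𝕜 (φ n) (ψ n)‖ ≤ K)
    (h : H) (F : Finset ι) :
    ∑ n ∈ F, ‖m n‖ ^ 2 * ‖inner 𝕜 (ψ n) h‖ ^ 2 ≤ (2 * K / a) ^ 2 * ‖h‖ ^ 2 := by
  set x := fun n => (m n • rankOne 𝕜 (φ n) (ψ n)) h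
  have hx : ∀ G : Finset ι, ‖∑ n ∈ G, x n‖ ≤ K * ‖h‖ := fun G => by
    rw [← _root_.sum_apply]
    exact (ContinuousLinearMap.le_opNorm _ h).trans (by gcongr; exact hK G)
  have hxn : ∀ n, a ^ 2 * (‖m n‖ ^ 2 * ‖inner 𝕜 (ψ n) h‖ ^ 2) ≤ ‖x n‖ ^ 2 := fun n => by
    simp only [x, _root_.smul_apply, InnerProductSpace.rankOne_apply, norm_smul]
    rw [mul_comm, ← mul_pow, ← mul_pow, mul_assoc]
    gcongr
    exact hφ n
  calc ∑ n ∈ F, ‖m n‖ ^ 2 * ‖inner 𝕜 (ψ n) h‖ ^ 2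
      = (∑ n ∈ F, a ^ 2 * (‖m n‖ ^ 2 * ‖inner 𝕜 (ψ n) h‖ ^ 2)) / a ^ 2 := by
        rw [← Finset.mul_sum]; field_simp
    _ ≤ (∑ n ∈ F, ‖x n‖ ^ 2) / a ^ 2 := by gcongr with n; exact hxn n
    _ ≤ (2 * (K * ‖h‖)) ^ 2 / a ^ 2 := by
        gcongr; exact sum_norm_sq_le_of_forall_norm_sum_le 𝕜 x hx F
    _ = (2 * K / a) ^ 2 * ‖h‖ ^ 2 := by ring

end RankOne

/-- If M_{m,Φ,Ψ} or M_{m,Ψ,Φ} is unconditionally convergent on H and Φ is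
norm-bounded below, then mΨ is a Bessel sequence for H. -/
theorem stmt_1
    {H : Type*} [NormedAddCommGroup H] [InnerProductSpace ℂ H] [CompleteSpace H]
    (φ ψ : ℕ → H) (m : ℕ → ℂ)
    (hconv : (∀ f : H, Summable (fun n => (m n * (inner ℂ (ψ n) f : ℂ)) • φ n)) ∨
             (∀ f : H, Summable (fun n => (m n * (inner ℂ (φ n) f : ℂ)) • ψ n)))
    (hNBB : ∃ a : ℝ, 0 < a ∧ ∀ n, a ≤ ‖φ n‖) :
    ∃ B : ℝ, 0 < B ∧ ∀ h : H,
      Summable (fun n => ‖m n‖ ^ 2 * ‖(inner ℂ (ψ n) h : ℂ)‖ ^ 2) ∧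
      ∑' n, ‖m n‖ ^ 2 * ‖(inner ℂ (ψ n) h : ℂ)‖ ^ 2 ≤ B * ‖h‖ ^ 2 := by
  obtain ⟨a, ha, hφ⟩ := hNBB
  obtain ⟨K, hK⟩ : ∃ K, ∀ (h : H) (F : Finset ℕ),
      ∑ n ∈ F, ‖m n‖ ^ 2 * ‖inner ℂ (ψ n) h‖ ^ 2 ≤ (2 * K / a) ^ 2 * ‖h‖ ^ 2 := by
    rcases hconv with hc | hc
    · obtain ⟨K, hK⟩ := exists_forall_norm_finset_sum_le_of_summable_apply
        (g := fun n => m n • rankOne ℂ (φ n) (ψ n)) (by simpa [smul_smul] using hc)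
      exact ⟨K, sum_norm_sq_mul_norm_inner_sq_le ha hφ hK⟩
    · obtain ⟨K, hK⟩ := exists_forall_norm_finset_sum_le_of_summable_apply
        (g := fun n => m n • rankOne ℂ (ψ n) (φ n)) (by simpa [smul_smul] using hc)
      refine ⟨K, fun h F => ?_⟩
      simpa only [RCLike.norm_conj] using
        sum_norm_sq_mul_norm_inner_sq_le (m := fun n => conj (m n)) ha hφ
          (fun G => (norm_sum_conj_smul_rankOne m φ ψ G).trans_le (hK G)) h F
  refine ⟨(2 * K / a) ^ 2 + 1, by positivity, fun h => ?_⟩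
  have hF : ∀ F : Finset ℕ, ∑ n ∈ F, ‖m n‖ ^ 2 * ‖inner ℂ (ψ n) h‖ ^ 2
      ≤ ((2 * K / a) ^ 2 + 1) * ‖h‖ ^ 2 :=
    fun F => (hK h F).trans (by gcongr; linarith)
  have hs := summable_of_sum_le (fun n => by positivity) hF
  exact ⟨hs, hs.tsum_le_of_sum_le hF⟩
end

section
/- Let m : ℕ → ℂ and let Φ = (φ_n), Ψ = (ψ_n) be sequences in a complex Hilbert space H. Suppose that for every f ∈ H the family (m_n ⟨f, ψ_n⟩ φ_n)_{n∈ℕ} is unconditionally summable, or that for every f ∈ H the family (m_n ⟨f, φ_n⟩ ψ_n)_{n∈ℕ} is unconditionally summable. If both Φ and Ψ are norm-bounded below (inf_n ‖φ_n‖ > 0 and inf_n ‖ψ_n‖ > 0), then m is bounded: sup_n |m_n| < ∞. -/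
/-!
Each term `f ↦ (m n * ⟪ψ n, f⟫) • φ n` is a rank-one operator of norm `‖m n‖ ‖ψ n‖ ‖φ n‖`.
Terms of a summable family tend to zero, so the operators are pointwise bounded, and by
Banach–Steinhaus uniformly bounded in norm. Since `‖φ n‖` and `‖ψ n‖` are bounded below by
positive constants, this bounds `‖m n‖`.
-/

open Filter

theorem exists_bound_opNorm_of_summable {𝕜 E F ι : Type*} [NontriviallyNormedField 𝕜]
    [NormedAddCommGroup E] [NormedSpace 𝕜 E] [CompleteSpace E]
    [NormedAddCommGroup F] [NormedSpace 𝕜 F]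
    (T : ι → E →L[𝕜] F) (hT : ∀ f, Summable fun i => T i f) :
    ∃ C, ∀ i, ‖T i‖ ≤ C :=
  banach_steinhaus fun f =>
    let ⟨C, hC⟩ := (hT f).tendsto_cofinite_zero.norm.bddAbove_range_of_cofinite
    ⟨C, fun i => hC ⟨i, rfl⟩⟩

section Multiplier

variable {𝕜 H ι : Type*} [RCLike 𝕜] [NormedAddCommGroup H] [InnerProductSpace 𝕜 H]

noncomputable def multiplierTerm (m : ι → 𝕜) (φ ψ : ι → H) (i : ι) : H →L[𝕜] H :=
  (m i • innerSL 𝕜 (ψ i)).smulRight (φ i)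

theorem multiplierTerm_apply (m : ι → 𝕜) (φ ψ : ι → H) (i : ι) (f : H) :
    multiplierTerm m φ ψ i f = (m i * inner 𝕜 (ψ i) f) • φ i := by
  simp [multiplierTerm, smul_eq_mul]

theorem norm_multiplierTerm (m : ι → 𝕜) (φ ψ : ι → H) (i : ι) :
    ‖multiplierTerm m φ ψ i‖ = ‖m i‖ * ‖ψ i‖ * ‖φ i‖ := by
  rw [multiplierTerm, ContinuousLinearMap.norm_smulRight_apply, norm_smul, innerSL_apply_norm]

theorem exists_bound_norm_of_summable_multiplier [CompleteSpace H] (φ ψ : ι → H) (m : ι → 𝕜)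
    (hsum : ∀ f : H, Summable fun i => (m i * inner 𝕜 (ψ i) f) • φ i)
    (hφ : ∃ a : ℝ, 0 < a ∧ ∀ i, a ≤ ‖φ i‖) (hψ : ∃ a : ℝ, 0 < a ∧ ∀ i, a ≤ ‖ψ i‖) :
    ∃ b : ℝ, ∀ i, ‖m i‖ ≤ b := by
  obtain ⟨a, ha, haφ⟩ := hφ
  obtain ⟨c, hc, hcψ⟩ := hψ
  obtain ⟨C, hC⟩ := exists_bound_opNorm_of_summable (multiplierTerm m φ ψ)
    fun f => by simpa only [multiplierTerm_apply] using hsum f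
  refine ⟨C / (c * a), fun i => ?_⟩
  rw [le_div_iff₀ (by positivity)]
  calc ‖m i‖ * (c * a) ≤ ‖m i‖ * ‖ψ i‖ * ‖φ i‖ := by
        rw [← mul_assoc]
        gcongr
        exacts [hcψ i, haφ i]
    _ = ‖multiplierTerm m φ ψ i‖ := (norm_multiplierTerm m φ ψ i).symm
    _ ≤ C := hC i

end Multiplier

/-- If M_{m,Φ,Ψ} or M_{m,Ψ,Φ} is unconditionally convergent on H and both Φ
and Ψ are norm-bounded below, then m is bounded. -/
theorem stmt_3
    {H : Type*} [NormedAddCommGroup H] [InnerProductSpace ℂ H] [CompleteSpace H]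
    (φ ψ : ℕ → H) (m : ℕ → ℂ)
    (hconv : (∀ f : H, Summable (fun n => (m n * (inner ℂ (ψ n) f : ℂ)) • φ n)) ∨
             (∀ f : H, Summable (fun n => (m n * (inner ℂ (φ n) f : ℂ)) • ψ n)))
    (hφ : ∃ a : ℝ, 0 < a ∧ ∀ n, a ≤ ‖φ n‖)
    (hψ : ∃ a : ℝ, 0 < a ∧ ∀ n, a ≤ ‖ψ n‖) :
    ∃ b : ℝ, ∀ n, ‖m n‖ ≤ b := by
  rcases hconv with h | h
  · exact exists_bound_norm_of_summable_multiplier φ ψ m h hφ hψ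
  · exact exists_bound_norm_of_summable_multiplier ψ φ m h hψ hφ
end

section
/- Let Φ = (φ_n) be a Riesz basis for a complex Hilbert space H, let Ψ = (ψ_n) be a sequence in H and m : ℕ → ℂ. Suppose that the multiplier M_{m,Φ,Ψ} or the multiplier M_{m,Ψ,Φ} is well defined on H, i.e. for every f ∈ H the partial sums ∑_{n<N} m_n ⟨f, ψ_n⟩ φ_n (respectively ∑_{n<N} m_n ⟨f, φ_n⟩ ψ_n) converge in H as N → ∞. If Ψ is norm-bounded below (inf_n ‖ψ_n‖ > 0), then m is bounded: sup_n |m_n| < ∞. -/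
/-!
Well-definedness of either multiplier means that for every `f` the terms of a convergent
series, `m n ⟨f, u n⟩ v n` with `{u, v} = {Φ, Ψ}`, stay bounded. Both `Φ` (by the lower Riesz
bound applied to unit coefficient vectors) and `Ψ` are norm-bounded below, so dividing by
`‖v n‖` shows that the functionals `m n ⟨·, u n⟩` are pointwise bounded. By Banach–Steinhaus they
are uniformly bounded, and their norms `|m n| ‖u n‖` dominate `|m n|` times a positive constant.
-/

open Filter Finset Topology

def IsRieszBasis {H : Type*} [NormedAddCommGroup H] [InnerProductSpace ℂ H] (φ : ℕ → H) : Prop :=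
  Dense (Submodule.span ℂ (Set.range φ) : Set H) ∧
  ∃ A B : ℝ, 0 < A ∧ 0 < B ∧ ∀ c : ℕ → ℂ, Summable (fun n => ‖c n‖ ^ 2) →
    Summable (fun n => c n • φ n) ∧
    A * ∑' n, ‖c n‖ ^ 2 ≤ ‖∑' n, c n • φ n‖ ^ 2 ∧
    ‖∑' n, c n • φ n‖ ^ 2 ≤ B * ∑' n, ‖c n‖ ^ 2

theorem IsRieszBasis.exists_pos_le_norm {H : Type*} [NormedAddCommGroup H]
    [InnerProductSpace ℂ H] {φ : ℕ → H} (hφ : IsRieszBasis φ) :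
    ∃ a : ℝ, 0 < a ∧ ∀ n, a ≤ ‖φ n‖ := by
  obtain ⟨-, A, _, hA, -, hRiesz⟩ := hφ
  refine ⟨√A, Real.sqrt_pos.mpr hA, fun n => ?_⟩
  set e : ℕ → ℂ := Pi.single n 1
  have hsupp : ∀ k, k ≠ n → e k = 0 := fun k hk => Pi.single_eq_of_ne hk _
  have hsum : Summable fun k => ‖e k‖ ^ 2 :=
    summable_of_ne_finset_zero (s := {n}) fun k hk => by
      simp [hsupp k (notMem_singleton.mp hk)]
  obtain ⟨-, hlower, -⟩ := hRiesz e hsum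
  rw [tsum_eq_single n fun k hk => by simp [hsupp k hk],
    tsum_eq_single n fun k hk => by simp [hsupp k hk]] at hlower
  simp only [e, Pi.single_eq_same, norm_one, one_pow, mul_one, one_smul] at hlower
  exact (Real.sqrt_le_sqrt hlower).trans_eq (Real.sqrt_sq (norm_nonneg _))

theorem norm_le_div_of_norm_smul_le {𝕜 E : Type*} [NormedField 𝕜] [SeminormedAddCommGroup E]
    [NormedSpace 𝕜 E] {c : 𝕜} {w : E} {a C : ℝ} (ha : 0 < a) (hw : a ≤ ‖w‖)
    (h : ‖c • w‖ ≤ C) : ‖c‖ ≤ C / a := by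
  rw [le_div_iff₀ ha]
  calc ‖c‖ * a ≤ ‖c‖ * ‖w‖ := mul_le_mul_of_nonneg_left hw (norm_nonneg c)
    _ = ‖c • w‖ := (norm_smul c w).symm
    _ ≤ C := h

theorem exists_norm_le_of_tendsto_sum_range {E : Type*} [SeminormedAddCommGroup E]
    {u : ℕ → E} {g : E} (h : Tendsto (fun N => ∑ n ∈ range N, u n) atTop (𝓝 g)) :
    ∃ C, ∀ n, ‖u n‖ ≤ C := by
  obtain ⟨C, hC⟩ := (Metric.isBounded_range_of_tendsto _ h).exists_norm_le
  refine ⟨C + C, fun n => ?_⟩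
  calc ‖u n‖ = ‖∑ k ∈ range (n + 1), u k - ∑ k ∈ range n, u k‖ := by
        rw [sum_range_succ_sub_sum]
    _ ≤ C + C := (norm_sub_le _ _).trans
        (add_le_add (hC _ (Set.mem_range_self _)) (hC _ (Set.mem_range_self _)))

theorem exists_norm_le_of_tendsto_sum_range_smul {𝕜 E : Type*} [NormedField 𝕜]
    [SeminormedAddCommGroup E] [NormedSpace 𝕜 E] {c : ℕ → 𝕜} {w : ℕ → E} {a : ℝ} {g : E}
    (ha : 0 < a) (hw : ∀ n, a ≤ ‖w n‖)
    (h : Tendsto (fun N => ∑ n ∈ range N, c n • w n) atTop (𝓝 g)) :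
    ∃ C, ∀ n, ‖c n‖ ≤ C := by
  obtain ⟨C, hC⟩ := exists_norm_le_of_tendsto_sum_range h
  exact ⟨C / a, fun n => norm_le_div_of_norm_smul_le ha (hw n) (hC n)⟩

theorem exists_norm_le_of_forall_exists_norm_mul_inner_le {𝕜 E : Type*} [RCLike 𝕜]
    [NormedAddCommGroup E] [InnerProductSpace 𝕜 E] [CompleteSpace E] {c : ℕ → 𝕜} {v : ℕ → E}
    {a : ℝ} (ha : 0 < a) (hv : ∀ n, a ≤ ‖v n‖)
    (h : ∀ f, ∃ C, ∀ n, ‖c n * inner 𝕜 (v n) f‖ ≤ C) :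
    ∃ C, ∀ n, ‖c n‖ ≤ C := by
  obtain ⟨C, hC⟩ := banach_steinhaus (g := fun n => c n • innerSL 𝕜 (v n)) fun f => by
    simpa using h f
  exact ⟨C / a, fun n => norm_le_div_of_norm_smul_le ha
    ((hv n).trans_eq (innerSL_apply_norm 𝕜 (v n)).symm) (hC n)⟩

/-- If Φ is a Riesz basis, M_{m,Φ,Ψ} or M_{m,Ψ,Φ} is well defined on H, and Ψ
is norm-bounded below, then m is bounded. -/
theorem stmt_5
    {H : Type*} [NormedAddCommGroup H] [InnerProductSpace ℂ H] [CompleteSpace H]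
    (φ ψ : ℕ → H) (m : ℕ → ℂ)
    (hΦ : IsRieszBasis φ)
    (hwd : (∀ f : H, ∃ g : H, Tendsto
              (fun N => ∑ n ∈ Finset.range N, (m n * (inner ℂ (ψ n) f : ℂ)) • φ n)
              atTop (nhds g)) ∨
           (∀ f : H, ∃ g : H, Tendsto
              (fun N => ∑ n ∈ Finset.range N, (m n * (inner ℂ (φ n) f : ℂ)) • ψ n)
              atTop (nhds g)))
    (hNBB : ∃ a : ℝ, 0 < a ∧ ∀ n, a ≤ ‖ψ n‖) :
    ∃ b : ℝ, ∀ n, ‖m n‖ ≤ b := by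
  obtain ⟨a, ha, hψ⟩ := hNBB
  obtain ⟨a', ha', hφ⟩ := hΦ.exists_pos_le_norm
  rcases hwd with hwd | hwd
  · refine exists_norm_le_of_forall_exists_norm_mul_inner_le ha hψ fun f => ?_
    obtain ⟨g, hg⟩ := hwd f
    exact exists_norm_le_of_tendsto_sum_range_smul ha' hφ hg
  · refine exists_norm_le_of_forall_exists_norm_mul_inner_le ha' hφ fun f => ?_
    obtain ⟨g, hg⟩ := hwd f
    exact exists_norm_le_of_tendsto_sum_range_smul ha hψ hg
end

section
/- Let Φ = (φ_n) and Ψ = (ψ_n) be Bessel sequences for a complex Hilbert space H and let m : ℕ → ℂ be bounded, so that M_{m,Φ,Ψ} f = ∑_n m_n ⟨f, ψ_n⟩ φ_n defines a bounded operator on H. If M_{m,Φ,Ψ} is invertible on H (a bounded linear bijection of H onto H), then Φ and Ψ are frames for H: there exist constants A_Φ, A_Ψ > 0 with A_Φ‖h‖² ≤ ∑_n |⟨h, φ_n⟩|² and A_Ψ‖h‖² ≤ ∑_n |⟨h, ψ_n⟩|² for every h ∈ H. -/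
/-!
By Cauchy–Schwarz in `ℓ²`, `|⟪h, M f⟫|² ≤ b² (∑ |⟪ψₙ, f⟫|²) (∑ |⟪φₙ, h⟫|²)`. Since `M` is
invertible, `‖f‖ ≤ K ‖M f‖` for some `K`. Taking `f = M⁻¹ h` and the upper bound for `Ψ` gives
`‖h‖⁴ ≤ b² B_Ψ K² ‖h‖² ∑ |⟪φₙ, h⟫|²`, the lower frame bound for `Φ`. Taking `h = M f` and the upper
bound for `Φ` gives `‖M f‖² ≤ b² B_Φ ∑ |⟪ψₙ, f⟫|²`, hence the lower frame bound for `Ψ`.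
-/

open scoped InnerProductSpace

theorem summable_mul_and_tsum_mul_sq_le_tsum_sq_mul_tsum_sq {ι : Type*} {f g : ι → ℝ} (hf : ∀ i, 0 ≤ f i)
    (hg : ∀ i, 0 ≤ g i) (hf2 : Summable fun i => f i ^ 2) (hg2 : Summable fun i => g i ^ 2) :
    (Summable fun i => f i * g i) ∧
      (∑' i, f i * g i) ^ 2 ≤ (∑' i, f i ^ 2) * ∑' i, g i ^ 2 := by
  obtain ⟨hfg, hCS⟩ := Real.summable_and_inner_le_Lp_mul_Lq_tsum_of_nonneg .two_two hf hg
    (by simpa only [Real.rpow_two] using hf2) (by simpa only [Real.rpow_two] using hg2)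
  simp only [Real.rpow_two, ← Real.sqrt_eq_rpow] at hCS
  refine ⟨hfg, ?_⟩
  calc (∑' i, f i * g i) ^ 2 ≤ (√(∑' i, f i ^ 2) * √(∑' i, g i ^ 2)) ^ 2 :=
        pow_le_pow_left₀ (tsum_nonneg fun i => mul_nonneg (hf i) (hg i)) hCS 2
    _ = (∑' i, f i ^ 2) * ∑' i, g i ^ 2 := by
        rw [mul_pow, Real.sq_sqrt (tsum_nonneg fun i => sq_nonneg _),
          Real.sq_sqrt (tsum_nonneg fun i => sq_nonneg _)]

theorem ContinuousLinearMap.norm_map_tsum_le_of_le {ι 𝕜 E F : Type*} [NontriviallyNormedField 𝕜]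
    [NormedAddCommGroup E] [NormedSpace 𝕜 E] [NormedAddCommGroup F] [NormedSpace 𝕜 F]
    (L : E →L[𝕜] F) {x : ι → E} {a : ι → ℝ} (ha : Summable a) (hle : ∀ i, ‖L (x i)‖ ≤ a i) :
    ‖L (∑' i, x i)‖ ≤ ∑' i, a i := by
  -- `x` need not be summable: a divergent `tsum` is `0`.
  by_cases hx : Summable x
  · rw [L.map_tsum hx]
    exact tsum_of_norm_bounded ha.hasSum hle
  · rw [tsum_eq_zero_of_not_summable hx, map_zero, norm_zero]
    exact tsum_nonneg fun i => (norm_nonneg _).trans (hle i)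

theorem exists_pos_mul_le_of_le_mul {α : Type*} {u v : α → ℝ} {K : ℝ} (hv : ∀ x, 0 ≤ v x)
    (h : ∀ x, u x ≤ K * v x) : ∃ A : ℝ, 0 < A ∧ ∀ x, A * u x ≤ v x := by
  refine ⟨(max K 1)⁻¹, by positivity, fun x => ?_⟩
  rw [inv_mul_le_iff₀ (by positivity)]
  exact (h x).trans (mul_le_mul_of_nonneg_right (le_max_left _ _) (hv x))

section
variable {𝕜 E : Type*} [RCLike 𝕜] [NormedAddCommGroup E] [InnerProductSpace 𝕜 E]

theorem norm_inner_tsum_multiplier_sq_le {ι : Type*} (φ ψ : ι → E) {m : ι → 𝕜} {b : ℝ}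
    (hm : ∀ i, ‖m i‖ ≤ b) {f h : E} (hφ : Summable fun i => ‖⟪φ i, h⟫_𝕜‖ ^ 2)
    (hψ : Summable fun i => ‖⟪ψ i, f⟫_𝕜‖ ^ 2) :
    ‖⟪h, ∑' i, (m i * ⟪ψ i, f⟫_𝕜) • φ i⟫_𝕜‖ ^ 2 ≤
      b ^ 2 * (∑' i, ‖⟪ψ i, f⟫_𝕜‖ ^ 2) * ∑' i, ‖⟪φ i, h⟫_𝕜‖ ^ 2 := by
  obtain ⟨hsum, hCS⟩ := summable_mul_and_tsum_mul_sq_le_tsum_sq_mul_tsum_sq (fun i => norm_nonneg _)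
    (fun i => norm_nonneg _) hψ hφ
  have hterm : ∀ i, ‖innerSL 𝕜 h ((m i * ⟪ψ i, f⟫_𝕜) • φ i)‖ ≤
      b * (‖⟪ψ i, f⟫_𝕜‖ * ‖⟪φ i, h⟫_𝕜‖) := fun i => by
    rw [innerSL_apply_apply, inner_smul_right, norm_mul, norm_mul, norm_inner_symm h, mul_assoc]
    exact mul_le_mul_of_nonneg_right (hm i) (by positivity)
  calc ‖⟪h, ∑' i, (m i * ⟪ψ i, f⟫_𝕜) • φ i⟫_𝕜‖ ^ 2
      ≤ (∑' i, b * (‖⟪ψ i, f⟫_𝕜‖ * ‖⟪φ i, h⟫_𝕜‖)) ^ 2 :=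
        pow_le_pow_left₀ (norm_nonneg _)
          ((innerSL 𝕜 h).norm_map_tsum_le_of_le (hsum.mul_left b) hterm) 2
    _ = b ^ 2 * (∑' i, ‖⟪ψ i, f⟫_𝕜‖ * ‖⟪φ i, h⟫_𝕜‖) ^ 2 := by rw [tsum_mul_left, mul_pow]
    _ ≤ b ^ 2 * (∑' i, ‖⟪ψ i, f⟫_𝕜‖ ^ 2) * ∑' i, ‖⟪φ i, h⟫_𝕜‖ ^ 2 := by
        rw [mul_assoc]
        exact mul_le_mul_of_nonneg_left hCS (sq_nonneg b)

theorem norm_sq_le_of_norm_inner_self_sq_le {x : E} {y : ℝ} (hy : 0 ≤ y)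
    (h : ‖⟪x, x⟫_𝕜‖ ^ 2 ≤ ‖x‖ ^ 2 * y) : ‖x‖ ^ 2 ≤ y := by
  rw [inner_self_eq_norm_sq_to_K, norm_pow, RCLike.norm_ofReal, abs_norm, sq (‖x‖ ^ 2)] at h
  nlinarith

variable {T : E → E} {S R : E → ℝ} {c B C : ℝ}

theorem exists_pos_mul_norm_sq_le_left_of_norm_inner_sq_le (hT : Function.Surjective T)
    (hC : ∀ x, ‖x‖ ≤ C * ‖T x‖) (hc : 0 ≤ c) (hS : ∀ x, 0 ≤ S x) (hB : 0 ≤ B)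
    (hR : ∀ x, R x ≤ B * ‖x‖ ^ 2) (hTRS : ∀ f h, ‖⟪h, T f⟫_𝕜‖ ^ 2 ≤ c * R f * S h) :
    ∃ A : ℝ, 0 < A ∧ ∀ h, A * ‖h‖ ^ 2 ≤ S h := by
  refine exists_pos_mul_le_of_le_mul hS (K := c * B * C ^ 2) fun h => ?_
  obtain ⟨f, rfl⟩ := hT h
  have hSf := hS (T f)
  have hf : ‖f‖ ^ 2 ≤ C ^ 2 * ‖T f‖ ^ 2 :=
    (pow_le_pow_left₀ (norm_nonneg f) (hC f) 2).trans_eq (mul_pow _ _ 2)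
  refine norm_sq_le_of_norm_inner_self_sq_le (𝕜 := 𝕜) (by positivity) ?_
  calc ‖⟪T f, T f⟫_𝕜‖ ^ 2 ≤ c * R f * S (T f) := hTRS f (T f)
    _ ≤ c * (B * ‖f‖ ^ 2) * S (T f) := by gcongr; exact hR f
    _ ≤ c * (B * (C ^ 2 * ‖T f‖ ^ 2)) * S (T f) := by gcongr
    _ = ‖T f‖ ^ 2 * (c * B * C ^ 2 * S (T f)) := by ring

theorem exists_pos_mul_norm_sq_le_right_of_norm_inner_sq_le (hC : ∀ x, ‖x‖ ≤ C * ‖T x‖)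
    (hc : 0 ≤ c) (hR : ∀ x, 0 ≤ R x) (hB : 0 ≤ B) (hS : ∀ x, S x ≤ B * ‖x‖ ^ 2)
    (hTRS : ∀ f h, ‖⟪h, T f⟫_𝕜‖ ^ 2 ≤ c * R f * S h) :
    ∃ A : ℝ, 0 < A ∧ ∀ f, A * ‖f‖ ^ 2 ≤ R f := by
  refine exists_pos_mul_le_of_le_mul hR (K := C ^ 2 * (c * B)) fun f => ?_
  have hRf := hR f
  have hTf : ‖T f‖ ^ 2 ≤ c * B * R f := by
    refine norm_sq_le_of_norm_inner_self_sq_le (𝕜 := 𝕜) (by positivity) ?_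
    calc ‖⟪T f, T f⟫_𝕜‖ ^ 2 ≤ c * R f * S (T f) := hTRS f (T f)
      _ ≤ c * R f * (B * ‖T f‖ ^ 2) := by gcongr; exact hS _
      _ = ‖T f‖ ^ 2 * (c * B * R f) := by ring
  calc ‖f‖ ^ 2 ≤ C ^ 2 * ‖T f‖ ^ 2 :=
        (pow_le_pow_left₀ (norm_nonneg f) (hC f) 2).trans_eq (mul_pow _ _ 2)
    _ ≤ C ^ 2 * (c * B * R f) := by gcongr
    _ = C ^ 2 * (c * B) * R f := by ring

end

/-- If Φ, Ψ are Bessel sequences, m is bounded, and the (bounded) multiplier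
M_{m,Φ,Ψ} is invertible on H (a bounded linear bijection of H onto H), then Φ and Ψ are
frames for H. -/
theorem stmt_6
    {H : Type*} [NormedAddCommGroup H] [InnerProductSpace ℂ H] [CompleteSpace H]
    (φ ψ : ℕ → H) (m : ℕ → ℂ)
    (BΦ : ℝ) (hBΦ : 0 < BΦ)
    (hΦ : ∀ h : H, Summable (fun n => ‖(inner ℂ (φ n) h : ℂ)‖ ^ 2) ∧
      ∑' n, ‖(inner ℂ (φ n) h : ℂ)‖ ^ 2 ≤ BΦ * ‖h‖ ^ 2)
    (BΨ : ℝ) (hBΨ : 0 < BΨ)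
    (hΨ : ∀ h : H, Summable (fun n => ‖(inner ℂ (ψ n) h : ℂ)‖ ^ 2) ∧
      ∑' n, ‖(inner ℂ (ψ n) h : ℂ)‖ ^ 2 ≤ BΨ * ‖h‖ ^ 2)
    (b : ℝ) (hm : ∀ n, ‖m n‖ ≤ b)
    (T : H →L[ℂ] H)
    (hT : ∀ f : H, T f = ∑' n, (m n * (inner ℂ (ψ n) f : ℂ)) • φ n)
    (hbij : Function.Bijective T) :
    (∃ A : ℝ, 0 < A ∧ ∀ h : H, A * ‖h‖ ^ 2 ≤ ∑' n, ‖(inner ℂ (φ n) h : ℂ)‖ ^ 2) ∧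
    (∃ A : ℝ, 0 < A ∧ ∀ h : H, A * ‖h‖ ^ 2 ≤ ∑' n, ‖(inner ℂ (ψ n) h : ℂ)‖ ^ 2) := by
  obtain ⟨-, K, hK⟩ := T.bijective_iff_dense_range_and_antilipschitz.1 hbij
  have hTK : ∀ x, ‖x‖ ≤ K * ‖T x‖ := hK.le_mul_norm (map_zero T)
  have hTΨΦ : ∀ f h, ‖⟪h, T f⟫_ℂ‖ ^ 2 ≤
      b ^ 2 * (∑' n, ‖⟪ψ n, f⟫_ℂ‖ ^ 2) * ∑' n, ‖⟪φ n, h⟫_ℂ‖ ^ 2 := fun f h => by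
    rw [hT f]
    exact norm_inner_tsum_multiplier_sq_le φ ψ hm (hΦ h).1 (hΨ f).1
  exact ⟨exists_pos_mul_norm_sq_le_left_of_norm_inner_sq_le hbij.2 hTK (sq_nonneg b)
      (fun h => tsum_nonneg fun n => sq_nonneg _) hBΨ.le (fun f => (hΨ f).2) hTΨΦ,
    exists_pos_mul_norm_sq_le_right_of_norm_inner_sq_le hTK (sq_nonneg b)
      (fun f => tsum_nonneg fun n => sq_nonneg _) hBΦ.le (fun h => (hΦ h).2) hTΨΦ⟩
end

section
/- Let Φ = (φ_n) and Ψ = (ψ_n) be Riesz bases for a complex Hilbert space H and let m : ℕ → ℂ be semi-normalized (0 < inf_n |m_n| ≤ sup_n |m_n| < ∞). Then for every f ∈ H the family (m_n ⟨f, ψ_n⟩ φ_n)_{n∈ℕ} is unconditionally summable, and the operator M_{m,Φ,Ψ} : f ↦ ∑_n m_n ⟨f, ψ_n⟩ φ_n is invertible on H, i.e. a bounded linear bijection of H onto H. -/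
open scoped lp ENNReal InnerProductSpace
open Function ContinuousLinearMap

section LpTwo

variable {ι : Type*} {E : ι → Type*} [∀ i, NormedAddCommGroup (E i)]

theorem memℓp_two_iff_summable_sq {f : ∀ i, E i} :
    Memℓp f 2 ↔ Summable fun i => ‖f i‖ ^ 2 := by
  simpa using memℓp_gen_iff (E := E) (p := 2) (by norm_num) (f := f)

theorem lp.norm_sq_eq_tsum_sq (f : lp E 2) : ‖f‖ ^ 2 = ∑' i, ‖f i‖ ^ 2 := by
  simpa using lp.norm_rpow_eq_tsum (p := 2) (by norm_num) f

end LpTwo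

section Synthesis

variable {ι 𝕜 E : Type*} [NormedField 𝕜] [NormedAddCommGroup E] [NormedSpace 𝕜 E]
  {p : ℝ≥0∞}

theorem exists_clm_lp_eq_tsum_smul [Fact (1 ≤ p)] (φ : ι → E) (C : ℝ)
    (hs : ∀ c : lp (fun _ : ι => 𝕜) p, Summable fun i => c i • φ i)
    (hC : ∀ c : lp (fun _ : ι => 𝕜) p, ‖∑' i, c i • φ i‖ ≤ C * ‖c‖) :
    ∃ U : lp (fun _ : ι => 𝕜) p →L[𝕜] E, ∀ c, U c = ∑' i, c i • φ i := by
  let U : lp (fun _ : ι => 𝕜) p →ₗ[𝕜] E :=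
    { toFun c := ∑' i, c i • φ i
      map_add' c d := by
        simp only [lp.coeFn_add, Pi.add_apply, add_smul]
        exact (hs c).tsum_add (hs d)
      map_smul' a c := by
        simp only [lp.coeFn_smul, Pi.smul_apply, smul_eq_mul, mul_smul, RingHom.id_apply]
        exact tsum_const_smul'' a }
  exact ⟨U.mkContinuous C hC, fun _ => rfl⟩

theorem lp.tsum_single_one_smul [DecidableEq ι] (φ : ι → E) (i : ι) :
    ∑' j, lp.single (E := fun _ : ι => 𝕜) p i 1 j • φ j = φ i := by
  rw [tsum_eq_single i fun j hj => by rw [lp.single_apply_ne p i _ hj, zero_smul],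
    lp.single_apply_self, one_smul]

end Synthesis

theorem ContinuousLinearMap.bijective_of_denseRange_of_mul_norm_le {𝕜 E F : Type*}
    [NontriviallyNormedField 𝕜] [NormedAddCommGroup E] [NormedSpace 𝕜 E] [CompleteSpace E]
    [NormedAddCommGroup F] [NormedSpace 𝕜 F] [CompleteSpace F] (U : E →L[𝕜] F)
    (hd : Dense (U.range : Set F)) {A : ℝ} (hA : 0 < A) (hU : ∀ x, A * ‖x‖ ≤ ‖U x‖) :
    Bijective U :=
  U.bijective_iff_dense_range_and_antilipschitz.mpr
    ⟨Submodule.dense_iff_topologicalClosure_eq_top.mp hd, ⟨A⁻¹, inv_nonneg.mpr hA.le⟩,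
      U.antilipschitz_of_bound fun x => (le_inv_mul_iff₀ hA).mpr (hU x)⟩

section Adjoint

variable {𝕜 E F : Type*} [RCLike 𝕜]
  [NormedAddCommGroup E] [InnerProductSpace 𝕜 E] [CompleteSpace E]
  [NormedAddCommGroup F] [InnerProductSpace 𝕜 F] [CompleteSpace F]

theorem ContinuousLinearMap.bijective_adjoint {A : E →L[𝕜] F} (hA : Bijective A) :
    Bijective (adjoint A) := by
  let e := ContinuousLinearEquiv.ofBijective A (LinearMap.ker_eq_bot.mpr hA.1)
    (LinearMap.range_eq_top.mpr hA.2)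
  have hAe : A ∘L (e.symm : F →L[𝕜] E) = .id 𝕜 F := e.coe_comp_coe_symm
  have heA : (e.symm : F →L[𝕜] E) ∘L A = .id 𝕜 E := e.coe_symm_comp_coe
  refine bijective_iff_has_inverse.mpr ⟨adjoint (e.symm : F →L[𝕜] E), fun y => ?_, fun x => ?_⟩
  · simpa [adjoint_comp, adjoint_id] using DFunLike.congr_fun (congrArg adjoint hAe) y
  · simpa [adjoint_comp, adjoint_id] using DFunLike.congr_fun (congrArg adjoint heA) x

theorem ContinuousLinearMap.adjoint_apply_eq_inner {ι : Type*} {U : ℓ²(ι, 𝕜) →L[𝕜] E}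
    {φ : ι → E} (hU : ∀ c, U c = ∑' i, c i • φ i) (f : E) (i : ι) :
    adjoint U f i = ⟪φ i, f⟫_𝕜 := by
  classical
  have hUi : U (lp.single 2 i 1) = φ i := by rw [hU, lp.tsum_single_one_smul]
  simpa [lp.inner_single_left, hUi] using adjoint_inner_right U (lp.single 2 i (1 : 𝕜)) f

end Adjoint

namespace IsRieszBasis

variable {H : Type*} [NormedAddCommGroup H] [InnerProductSpace ℂ H] {φ : ℕ → H}

theorem summable_smul (hφ : IsRieszBasis φ) (c : ℓ²(ℕ, ℂ)) : Summable fun n => c n • φ n :=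
  let ⟨_, _, _, _, _, hbounds⟩ := hφ
  (hbounds c (memℓp_two_iff_summable_sq.mp c.2)).1

theorem exists_bijective_synthesis [CompleteSpace H] (hφ : IsRieszBasis φ) :
    ∃ U : ℓ²(ℕ, ℂ) →L[ℂ] H, Bijective U ∧ ∀ c, U c = ∑' n, c n • φ n := by
  obtain ⟨hdense, A, B, hA, hB, hbounds⟩ := id hφ
  have hlower (c : ℓ²(ℕ, ℂ)) : (√A * ‖c‖) ^ 2 ≤ ‖∑' n, c n • φ n‖ ^ 2 := by
    rw [mul_pow, Real.sq_sqrt hA.le, lp.norm_sq_eq_tsum_sq]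
    exact (hbounds c (memℓp_two_iff_summable_sq.mp c.2)).2.1
  have hupper (c : ℓ²(ℕ, ℂ)) : ‖∑' n, c n • φ n‖ ^ 2 ≤ (√B * ‖c‖) ^ 2 := by
    rw [mul_pow, Real.sq_sqrt hB.le, lp.norm_sq_eq_tsum_sq]
    exact (hbounds c (memℓp_two_iff_summable_sq.mp c.2)).2.2
  obtain ⟨U, hU⟩ := exists_clm_lp_eq_tsum_smul φ √B hφ.summable_smul fun c =>
    le_of_pow_le_pow_left₀ two_ne_zero (by positivity) (hupper c)
  have hspan : Submodule.span ℂ (Set.range φ) ≤ U.range :=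
    Submodule.span_le.mpr <| Set.range_subset_iff.mpr fun n =>
      ⟨lp.single 2 n 1, (hU _).trans (lp.tsum_single_one_smul φ n)⟩
  refine ⟨U, U.bijective_of_denseRange_of_mul_norm_le (hdense.mono hspan) (Real.sqrt_pos.mpr hA)
    fun c => ?_, hU⟩
  rw [hU]
  exact le_of_pow_le_pow_left₀ two_ne_zero (norm_nonneg _) (hlower c)

theorem smul (hφ : IsRieszBasis φ) {m : ℕ → ℂ} {a b : ℝ} (ha : 0 < a) (hma : ∀ n, a ≤ ‖m n‖)
    (hmb : ∀ n, ‖m n‖ ≤ b) : IsRieszBasis fun n => m n • φ n := by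
  obtain ⟨hdense, A, B, hA, hB, hbounds⟩ := hφ
  have hm n : m n ≠ 0 := norm_pos_iff.mp (ha.trans_le (hma n))
  have hb : 0 < b := ha.trans_le ((hma 0).trans (hmb 0))
  have hspan :
      Submodule.span ℂ (Set.range φ) ≤ Submodule.span ℂ (Set.range fun n => m n • φ n) :=
    Submodule.span_le.mpr <| Set.range_subset_iff.mpr fun n => by
      rw [← inv_smul_smul₀ (hm n) (φ n)]
      exact Submodule.smul_mem _ _ (Submodule.subset_span ⟨n, rfl⟩)
  refine ⟨hdense.mono hspan, A * a ^ 2, B * b ^ 2, by positivity, by positivity, fun c hc => ?_⟩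
  have hge n : a ^ 2 * ‖c n‖ ^ 2 ≤ ‖c n * m n‖ ^ 2 := by
    rw [norm_mul, mul_pow, mul_comm]
    gcongr
    exact hma n
  have hle n : ‖c n * m n‖ ^ 2 ≤ b ^ 2 * ‖c n‖ ^ 2 := by
    rw [norm_mul, mul_pow, mul_comm]
    gcongr
    exact hmb n
  have hcm : Summable fun n => ‖c n * m n‖ ^ 2 :=
    (hc.mul_left _).of_nonneg_of_le (fun n => by positivity) hle
  have hlow : a ^ 2 * ∑' n, ‖c n‖ ^ 2 ≤ ∑' n, ‖c n * m n‖ ^ 2 := by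
    rw [← tsum_mul_left]
    exact (hc.mul_left _).tsum_le_tsum hge hcm
  have hup : ∑' n, ‖c n * m n‖ ^ 2 ≤ b ^ 2 * ∑' n, ‖c n‖ ^ 2 := by
    rw [← tsum_mul_left]
    exact hcm.tsum_le_tsum hle (hc.mul_left _)
  obtain ⟨hs, hl, hu⟩ := hbounds _ hcm
  simp only [smul_smul]
  refine ⟨hs, ?_, ?_⟩
  · rw [mul_assoc]
    exact (mul_le_mul_of_nonneg_left hlow hA.le).trans hl
  · rw [mul_assoc]
    exact hu.trans (mul_le_mul_of_nonneg_left hup hB.le)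

end IsRieszBasis

/-- If Φ, Ψ are Riesz bases and m is semi-normalized, then M_{m,Φ,Ψ} is
unconditionally convergent on H and invertible on H. -/
theorem stmt_7
    {H : Type*} [NormedAddCommGroup H] [InnerProductSpace ℂ H] [CompleteSpace H]
    (φ ψ : ℕ → H) (m : ℕ → ℂ)
    (hΦ : IsRieszBasis φ) (hΨ : IsRieszBasis ψ)
    (hm : ∃ a b : ℝ, 0 < a ∧ (∀ n, a ≤ ‖m n‖) ∧ (∀ n, ‖m n‖ ≤ b)) :
    (∀ f : H, Summable (fun n => (m n * (inner ℂ (ψ n) f : ℂ)) • φ n)) ∧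
    ∃ T : H →L[ℂ] H,
      (∀ f : H, T f = ∑' n, (m n * (inner ℂ (ψ n) f : ℂ)) • φ n) ∧
      Function.Bijective T := by
  obtain ⟨a, b, ha, hma, hmb⟩ := hm
  have hmφ := hΦ.smul ha hma hmb
  obtain ⟨U, hU_bij, hU⟩ := hmφ.exists_bijective_synthesis
  obtain ⟨V, hV_bij, hV⟩ := hΨ.exists_bijective_synthesis
  have hterm f n : (m n * ⟪ψ n, f⟫_ℂ) • φ n = adjoint V f n • m n • φ n := by
    rw [adjoint_apply_eq_inner hV, smul_smul, mul_comm]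
  refine ⟨fun f => ?_, U ∘L adjoint V, fun f => ?_, hU_bij.comp (bijective_adjoint hV_bij)⟩
  · simpa only [hterm] using hmφ.summable_smul (adjoint V f)
  · simpa only [hterm, ContinuousLinearMap.comp_apply] using hU (adjoint V f)
end

section
/- Let Φ = (φ_n) be a Bessel sequence for a complex Hilbert space H which is norm-bounded below (inf_n ‖φ_n‖ > 0) and which is not a frame for H. Then for every sequence Ψ = (ψ_n) in H and every m : ℕ → ℂ, the multiplier M_{m,Φ,Ψ} cannot be both unconditionally convergent on H and invertible on H: if for every f ∈ H the family (m_n ⟨f, ψ_n⟩ φ_n) is unconditionally summable, then the map f ↦ ∑_n m_n ⟨f, ψ_n⟩ φ_n is not a bijection of H onto H. The same conclusion holds for M_{m,Ψ,Φ} : f ↦ ∑_n m_n ⟨f, φ_n⟩ ψ_n. -/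
/-- Bessel sequence for H with some bound B > 0. -/
def IsBessel {H : Type*} [NormedAddCommGroup H] [InnerProductSpace ℂ H] (φ : ℕ → H) : Prop :=
  ∃ B : ℝ, 0 < B ∧ ∀ h : H,
    Summable (fun n => ‖(inner ℂ (φ n) h : ℂ)‖ ^ 2) ∧
    ∑' n, ‖(inner ℂ (φ n) h : ℂ)‖ ^ 2 ≤ B * ‖h‖ ^ 2

/-- Frame for H with some bounds A, B > 0. -/
def IsFrame {H : Type*} [NormedAddCommGroup H] [InnerProductSpace ℂ H] (φ : ℕ → H) : Prop :=
  ∃ A B : ℝ, 0 < A ∧ 0 < B ∧ ∀ h : H,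
    Summable (fun n => ‖(inner ℂ (φ n) h : ℂ)‖ ^ 2) ∧
    A * ‖h‖ ^ 2 ≤ ∑' n, ‖(inner ℂ (φ n) h : ℂ)‖ ^ 2 ∧
    ∑' n, ‖(inner ℂ (φ n) h : ℂ)‖ ^ 2 ≤ B * ‖h‖ ^ 2

/-!
By Banach–Steinhaus, unconditional convergence of a multiplier makes its finite partial sums
uniformly bounded operators. In a Hilbert space, a family whose finite subsums are uniformly
bounded is square-summable (choose signs greedily using the parallelogram law), so for a
norm-bounded-below `Φ` the coefficients `m n * ⟪ψ n, f⟫` of `M_{m,Φ,Ψ} f` lie in `ℓ²` with norm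
`≲ ‖f‖`. If `M_{m,Φ,Ψ}` is invertible, every `h` is `∑ c n • φ n` with `‖c‖₂ ≲ ‖h‖`, and
Cauchy–Schwarz in `‖h‖² = ∑ c n * ⟪h, φ n⟫` gives the lower frame bound. The partial sums of
`M_{m,Ψ,Φ}` have the partial sums of `M_{m̄,Φ,Ψ}` as adjoints, so the same bound holds for
`m̄ n * ⟪ψ n, g⟫`; then Cauchy–Schwarz in `‖M f‖² = ∑ ⟪φ n, f⟫ * m n * ⟪M f, ψ n⟫` and the bounded
inverse of `M = M_{m,Ψ,Φ}` give `‖f‖² ≲ ∑ ‖⟪φ n, f⟫‖²`. Either way `Φ` would be a frame.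
-/

open Finset
open scoped ComplexConjugate InnerProductSpace

section SquareSummable

variable (𝕜 : Type*) {E ι : Type*} [RCLike 𝕜] [NormedAddCommGroup E] [InnerProductSpace 𝕜 E]

include 𝕜 in
theorem exists_subset_sum_norm_sq_le [DecidableEq ι] (x : ι → E) (t : Finset ι) :
    ∃ s ⊆ t, ∑ n ∈ t, ‖x n‖ ^ 2 ≤ ‖∑ n ∈ s, x n - ∑ n ∈ t \ s, x n‖ ^ 2 := by
  induction t using Finset.induction_on with
  | empty => simp
  | insert a t ha ih =>
    obtain ⟨s, hst, hs⟩ := ih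
    have has : a ∉ s := fun h => ha (hst h)
    set w := ∑ n ∈ s, x n - ∑ n ∈ t \ s, x n with hw
    have hpar := parallelogram_law_with_norm 𝕜 w (x a)
    rw [sum_insert ha]
    rcases le_total ‖w - x a‖ ‖w + x a‖ with h | h
    · refine ⟨insert a s, insert_subset_insert a hst, ?_⟩
      rw [sum_insert has, insert_sdiff_insert, sdiff_insert_of_notMem ha,
        show x a + ∑ n ∈ s, x n - ∑ n ∈ t \ s, x n = w + x a by rw [hw]; abel]
      nlinarith [pow_le_pow_left₀ (norm_nonneg _) h 2]
    · refine ⟨s, hst.trans (subset_insert a t), ?_⟩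
      rw [insert_sdiff_of_notMem _ has, sum_insert (fun h => ha (mem_sdiff.1 h).1),
        show ∑ n ∈ s, x n - (x a + ∑ n ∈ t \ s, x n) = w - x a by rw [hw]; abel]
      nlinarith [pow_le_pow_left₀ (norm_nonneg _) h 2]

include 𝕜 in
theorem sum_norm_sq_le_of_forall_norm_sum_le_s13 {x : ι → E} {K : ℝ}
    (hK : ∀ s : Finset ι, ‖∑ n ∈ s, x n‖ ≤ K) (t : Finset ι) :
    ∑ n ∈ t, ‖x n‖ ^ 2 ≤ (2 * K) ^ 2 := by
  classical
  obtain ⟨s, -, hs⟩ := exists_subset_sum_norm_sq_le 𝕜 x t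
  refine hs.trans (pow_le_pow_left₀ (norm_nonneg _) ?_ 2)
  calc _ ≤ ‖∑ n ∈ s, x n‖ + ‖∑ n ∈ t \ s, x n‖ := norm_sub_le _ _
    _ ≤ 2 * K := by linarith [hK s, hK (t \ s)]

variable {𝕜}

theorem sum_norm_sq_le_of_forall_norm_sum_smul_le {φ : ι → E} {a : ℝ} (ha : 0 < a)
    (hφ : ∀ n, a ≤ ‖φ n‖) {c : ι → 𝕜} {K : ℝ}
    (hK : ∀ s : Finset ι, ‖∑ n ∈ s, c n • φ n‖ ≤ K) (t : Finset ι) :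
    ∑ n ∈ t, ‖c n‖ ^ 2 ≤ (2 * K / a) ^ 2 := by
  have : a ^ 2 * ∑ n ∈ t, ‖c n‖ ^ 2 ≤ (2 * K) ^ 2 := by
    rw [mul_sum]
    refine (sum_le_sum fun n _ => ?_).trans (sum_norm_sq_le_of_forall_norm_sum_le_s13 𝕜 hK t)
    rw [norm_smul, mul_pow, mul_comm]
    gcongr
    exact hφ n
  rwa [div_pow, le_div_iff₀ (by positivity), mul_comm]

theorem norm_sq_le_of_hasSum_mul {u v : ι → 𝕜} {z : 𝕜} (hz : HasSum (fun n => u n * v n) z)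
    {A B : ℝ} (hu : ∀ s : Finset ι, ∑ n ∈ s, ‖u n‖ ^ 2 ≤ A)
    (hv : ∀ s : Finset ι, ∑ n ∈ s, ‖v n‖ ^ 2 ≤ B) : ‖z‖ ^ 2 ≤ A * B := by
  refine le_of_tendsto' (hz.norm.pow 2) fun s => ?_
  calc ‖∑ n ∈ s, u n * v n‖ ^ 2 ≤ (∑ n ∈ s, ‖u n‖ * ‖v n‖) ^ 2 := by
        gcongr
        simpa only [norm_mul] using norm_sum_le s (fun n => u n * v n)
    _ ≤ (∑ n ∈ s, ‖u n‖ ^ 2) * ∑ n ∈ s, ‖v n‖ ^ 2 := sum_mul_sq_le_sq_mul_sq _ _ _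
    _ ≤ A * B := by
        gcongr
        · exact (sum_nonneg fun n _ => sq_nonneg _).trans (hu ∅)
        · exact hu s
        · exact hv s

theorem norm_sq_le_of_hasSum_inner_self {x : E} {u v : ι → 𝕜}
    (hx : HasSum (fun n => u n * v n) ⟪x, x⟫_𝕜) {A B : ℝ}
    (hu : ∀ s : Finset ι, ∑ n ∈ s, ‖u n‖ ^ 2 ≤ (A * ‖x‖) ^ 2)
    (hv : ∀ s : Finset ι, ∑ n ∈ s, ‖v n‖ ^ 2 ≤ B) : ‖x‖ ^ 2 ≤ A ^ 2 * B := by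
  have h := norm_sq_le_of_hasSum_mul hx hu hv
  rw [inner_self_eq_norm_sq_to_K, norm_pow, RCLike.norm_ofReal, abs_norm] at h
  have hB : 0 ≤ B := by simpa using hv ∅
  rcases (norm_nonneg x).eq_or_lt with hx0 | hx0
  · rw [← hx0, sq, mul_zero]; positivity
  · nlinarith [pow_pos hx0 2]

end SquareSummable

theorem Summable.exists_forall_norm_sum_le {E ι : Type*} [SeminormedAddCommGroup E] {x : ι → E}
    (hx : Summable x) : ∃ C, ∀ s : Finset ι, ‖∑ n ∈ s, x n‖ ≤ C := by
  classical
  obtain ⟨s₀, hs₀⟩ := cauchySeq_finset_iff_vanishing_norm.1 hx.hasSum.cauchySeq 1 one_pos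
  refine ⟨1 + ∑ n ∈ s₀, ‖x n‖, fun s => ?_⟩
  rw [← sum_inter_add_sum_sdiff s s₀, add_comm]
  refine (norm_add_le _ _).trans (add_le_add (hs₀ _ disjoint_sdiff_self_left).le ?_)
  exact (norm_sum_le _ _).trans (sum_le_sum_of_subset_of_nonneg inter_subset_right
    fun _ _ _ => norm_nonneg _)

section Multiplier

variable {H ι : Type*} [NormedAddCommGroup H] [InnerProductSpace ℂ H]

noncomputable def multiplier (m : ι → ℂ) (φ ψ : ι → H) (f : H) : H :=
  ∑' n, (m n * ⟪ψ n, f⟫_ℂ) • φ n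

noncomputable def partialMultiplier (m : ι → ℂ) (φ ψ : ι → H) (s : Finset ι) : H →L[ℂ] H :=
  ∑ n ∈ s, (m n • innerSL ℂ (ψ n)).smulRight (φ n)

variable {m : ι → ℂ} {φ ψ : ι → H}

@[simp]
theorem partialMultiplier_apply (s : Finset ι) (f : H) :
    partialMultiplier m φ ψ s f = ∑ n ∈ s, (m n * ⟪ψ n, f⟫_ℂ) • φ n := by
  simp [partialMultiplier]

theorem adjoint_partialMultiplier [CompleteSpace H] (s : Finset ι) :
    ContinuousLinearMap.adjoint (partialMultiplier m φ ψ s) =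
      partialMultiplier (fun n => conj (m n)) ψ φ s := by
  refine ((ContinuousLinearMap.eq_adjoint_iff _ _).2 fun x y => ?_).symm
  simp only [partialMultiplier_apply, sum_inner, inner_sum, inner_smul_left, inner_smul_right,
    map_mul, RingHomCompTriple.comp_apply, RingHom.id_apply, inner_conj_symm]
  exact sum_congr rfl fun n _ => by ring

theorem exists_forall_norm_partialMultiplier_le [CompleteSpace H]
    (hsum : ∀ f, Summable fun n => (m n * ⟪ψ n, f⟫_ℂ) • φ n) :
    ∃ K, ∀ s, ‖partialMultiplier m φ ψ s‖ ≤ K :=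
  banach_steinhaus fun f => by simpa using (hsum f).exists_forall_norm_sum_le

theorem exists_continuousLinearMap_coe_eq_multiplier [CompleteSpace H] [Countable ι]
    (hsum : ∀ f, Summable fun n => (m n * ⟪ψ n, f⟫_ℂ) • φ n) :
    ∃ A : H →L[ℂ] H, ⇑A = multiplier m φ ψ :=
  ⟨continuousLinearMapOfTendsto (partialMultiplier m φ ψ)
    (tendsto_pi_nhds.2 fun f => by
      simp only [partialMultiplier_apply]
      exact (hsum f).hasSum), rfl⟩

theorem sum_norm_sq_multiplier_coeff_le {a K : ℝ} (ha : 0 < a) (hφ : ∀ n, a ≤ ‖φ n‖)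
    (hK : ∀ s, ‖partialMultiplier m φ ψ s‖ ≤ K) (f : H) (t : Finset ι) :
    ∑ n ∈ t, ‖m n * ⟪ψ n, f⟫_ℂ‖ ^ 2 ≤ (2 * K / a * ‖f‖) ^ 2 := by
  have := sum_norm_sq_le_of_forall_norm_sum_smul_le ha hφ (K := K * ‖f‖)
    (fun s => by simpa using (partialMultiplier m φ ψ s).le_of_opNorm_le (hK s) f) t
  convert this using 3
  ring

end Multiplier

section LowerFrameBound

variable {H ι : Type*} [NormedAddCommGroup H] [InnerProductSpace ℂ H] [CompleteSpace H]
  {φ ψ : ι → H} {m : ι → ℂ} {D : ℝ}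

theorem exists_lower_bound_of_surjective_multiplier
    (hφ : ∀ h, Summable fun n => ‖⟪φ n, h⟫_ℂ‖ ^ 2)
    (hD : ∀ f t, ∑ n ∈ t, ‖m n * ⟪ψ n, f⟫_ℂ‖ ^ 2 ≤ (D * ‖f‖) ^ 2)
    (A : H →L[ℂ] H) (hA : ∀ f, HasSum (fun n => (m n * ⟪ψ n, f⟫_ℂ) • φ n) (A f))
    (hA_surj : Function.Surjective A) :
    ∃ L, ∀ h, ‖h‖ ^ 2 ≤ L * ∑' n, ‖⟪φ n, h⟫_ℂ‖ ^ 2 := by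
  obtain ⟨C, -, hC⟩ := A.exists_preimage_norm_le hA_surj
  refine ⟨(D * C) ^ 2, fun h => ?_⟩
  obtain ⟨f, rfl, hf⟩ := hC h
  have hinner : HasSum (fun n => m n * ⟪ψ n, f⟫_ℂ * ⟪A f, φ n⟫_ℂ) ⟪A f, A f⟫_ℂ := by
    simpa only [innerSL_apply_apply, inner_smul_right] using (hA f).mapL (innerSL ℂ (A f))
  have hcoeff : ∀ t, ∑ n ∈ t, ‖m n * ⟪ψ n, f⟫_ℂ‖ ^ 2 ≤ (D * C * ‖A f‖) ^ 2 := fun t => by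
    refine (hD f t).trans ?_
    rw [mul_pow, mul_assoc, mul_pow D]
    gcongr
  exact norm_sq_le_of_hasSum_inner_self hinner hcoeff fun s => by
    simpa only [norm_inner_symm] using (hφ (A f)).sum_le_tsum s fun _ _ => sq_nonneg _

theorem exists_lower_bound_of_bijective_multiplier
    (hφ : ∀ h, Summable fun n => ‖⟪φ n, h⟫_ℂ‖ ^ 2)
    (hD : ∀ g t, ∑ n ∈ t, ‖conj (m n) * ⟪ψ n, g⟫_ℂ‖ ^ 2 ≤ (D * ‖g‖) ^ 2)
    (A : H →L[ℂ] H) (hA : ∀ f, HasSum (fun n => (m n * ⟪φ n, f⟫_ℂ) • ψ n) (A f))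
    (hA_bij : Function.Bijective A) :
    ∃ L, ∀ f, ‖f‖ ^ 2 ≤ L * ∑' n, ‖⟪φ n, f⟫_ℂ‖ ^ 2 := by
  obtain ⟨C, -, hC⟩ := A.exists_preimage_norm_le hA_bij.2
  refine ⟨C ^ 2 * D ^ 2, fun f => ?_⟩
  have hf : ‖f‖ ≤ C * ‖A f‖ := by
    obtain ⟨f', hf', hle⟩ := hC (A f)
    rwa [hA_bij.1 hf'] at hle
  have hinner : HasSum (fun n => m n * ⟪A f, ψ n⟫_ℂ * ⟪φ n, f⟫_ℂ) ⟪A f, A f⟫_ℂ := by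
    simpa only [innerSL_apply_apply, inner_smul_right, mul_right_comm (m _)]
      using (hA f).mapL (innerSL ℂ (A f))
  have hcoeff : ∀ t, ∑ n ∈ t, ‖m n * ⟪A f, ψ n⟫_ℂ‖ ^ 2 ≤ (D * ‖A f‖) ^ 2 := fun t => by
    simpa only [norm_mul, RCLike.norm_conj, norm_inner_symm] using hD (A f) t
  have hAf := norm_sq_le_of_hasSum_inner_self hinner hcoeff fun s =>
    (hφ f).sum_le_tsum s fun _ _ => sq_nonneg _
  calc ‖f‖ ^ 2 ≤ C ^ 2 * ‖A f‖ ^ 2 := by rw [← mul_pow]; gcongr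
    _ ≤ C ^ 2 * (D ^ 2 * ∑' n, ‖⟪φ n, f⟫_ℂ‖ ^ 2) := by gcongr
    _ = C ^ 2 * D ^ 2 * ∑' n, ‖⟪φ n, f⟫_ℂ‖ ^ 2 := by ring

end LowerFrameBound

section Frame

variable {H : Type*} [NormedAddCommGroup H] [InnerProductSpace ℂ H] {φ : ℕ → H}

theorem IsBessel.summable (hφ : IsBessel φ) (h : H) : Summable fun n => ‖⟪φ n, h⟫_ℂ‖ ^ 2 :=
  (hφ.choose_spec.2 h).1

theorem IsBessel.isFrame_of_le (hφ : IsBessel φ) {L : ℝ}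
    (hL : ∀ h, ‖h‖ ^ 2 ≤ L * ∑' n, ‖⟪φ n, h⟫_ℂ‖ ^ 2) : IsFrame φ := by
  obtain ⟨B, hB, hbessel⟩ := hφ
  refine ⟨(max L 1)⁻¹, B, by positivity, hB, fun h => ⟨(hbessel h).1, ?_, (hbessel h).2⟩⟩
  rw [inv_mul_le_iff₀ (by positivity)]
  exact (hL h).trans (mul_le_mul_of_nonneg_right (le_max_left _ _)
    (tsum_nonneg fun _ => sq_nonneg _))

end Frame

/-- If Φ is a norm-bounded-below Bessel sequence which is not a frame, then
for any Ψ and m, neither M_{m,Φ,Ψ} nor M_{m,Ψ,Φ} can be both unconditionally convergent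
and invertible (a bijection of H onto H). -/
theorem stmt_13
    {H : Type*} [NormedAddCommGroup H] [InnerProductSpace ℂ H] [CompleteSpace H]
    (φ : ℕ → H)
    (hΦ : IsBessel φ)
    (hNBB : ∃ a : ℝ, 0 < a ∧ ∀ n, a ≤ ‖φ n‖)
    (hnf : ¬ IsFrame φ) :
    ∀ (ψ : ℕ → H) (m : ℕ → ℂ),
      ((∀ f : H, Summable (fun n => (m n * (inner ℂ (ψ n) f : ℂ)) • φ n)) →
        ¬ Function.Bijective (fun f : H => ∑' n, (m n * (inner ℂ (ψ n) f : ℂ)) • φ n)) ∧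
      ((∀ f : H, Summable (fun n => (m n * (inner ℂ (φ n) f : ℂ)) • ψ n)) →
        ¬ Function.Bijective (fun f : H => ∑' n, (m n * (inner ℂ (φ n) f : ℂ)) • ψ n)) := by
  obtain ⟨a, ha, hφa⟩ := hNBB
  intro ψ m
  refine ⟨fun hsum hbij => hnf ?_, fun hsum hbij => hnf ?_⟩
  · obtain ⟨K, hK⟩ := exists_forall_norm_partialMultiplier_le hsum
    obtain ⟨A, hA⟩ := exists_continuousLinearMap_coe_eq_multiplier hsum
    have hA_bij : Function.Bijective A := by rw [hA]; exact hbij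
    exact hΦ.isFrame_of_le (exists_lower_bound_of_surjective_multiplier hΦ.summable
      (sum_norm_sq_multiplier_coeff_le ha hφa hK) A (fun f => hA ▸ (hsum f).hasSum)
      hA_bij.2).choose_spec
  · obtain ⟨K, hK⟩ := exists_forall_norm_partialMultiplier_le hsum
    have hK_adj : ∀ s, ‖partialMultiplier (fun n => conj (m n)) φ ψ s‖ ≤ K := fun s => by
      rw [← adjoint_partialMultiplier, LinearIsometryEquiv.norm_map]
      exact hK s
    obtain ⟨A, hA⟩ := exists_continuousLinearMap_coe_eq_multiplier hsum
    have hA_bij : Function.Bijective A := by rw [hA]; exact hbij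
    exact hΦ.isFrame_of_le (exists_lower_bound_of_bijective_multiplier hΦ.summable
      (sum_norm_sq_multiplier_coeff_le ha hφa hK_adj) A (fun f => hA ▸ (hsum f).hasSum)
      hA_bij).choose_spec
end

section
/- Let (e_n)_{n∈ℕ} be an orthonormal basis of a separable infinite-dimensional complex Hilbert space H. Define φ : ℕ → H by φ(2n) = φ(2n+1) = e_n, and m : ℕ → ℂ by m(2n) = 1/(n+2) and m(2n+1) = 1 − 1/(n+2). Then for every f ∈ H the family (m_j ⟨f, φ_j⟩ φ_j)_{j∈ℕ} is unconditionally summable with ∑_j m_j ⟨f, φ_j⟩ φ_j = f; that is, the multiplier M_{m,Φ,Φ} equals the identity operator on H (in particular it is unconditionally convergent and invertible on H, even though m is bounded but not semi-normalized). -/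
/-!
A bounded multiplier sequence maps the ℓ² coefficients of `f` in a Hilbert basis into ℓ², so
`∑ aₙ ⟪eₙ, f⟫ eₙ` and `∑ (1 - aₙ) ⟪eₙ, f⟫ eₙ` converge, and they add up to the expansion of `f`.
These are exactly the even and odd subseries of the multiplier series, which therefore
converges to `f`.
-/

open scoped InnerProductSpace ENNReal

namespace HilbertBasis

variable {ι 𝕜 E : Type*} [RCLike 𝕜] [NormedAddCommGroup E] [InnerProductSpace 𝕜 E]

theorem summable_mul_inner_smul (e : HilbertBasis ι 𝕜 E) {a : ι → 𝕜} (ha : Memℓp a ∞)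
    (f : E) : Summable fun i => (a i * ⟪e i, f⟫_𝕜) • e i := by
  obtain ⟨C, hC⟩ := ha.bddAbove
  have hmem : Memℓp (fun i => a i * e.repr f i) 2 :=
    ((lp.memℓp (e.repr f)).norm.const_mul C).mono fun i => by
      rw [norm_mul]
      exact mul_le_mul_of_nonneg_right (hC ⟨i, rfl⟩) (norm_nonneg _)
  simpa [e.repr_apply_apply] using (e.hasSum_repr_symm ⟨_, hmem⟩).summable

theorem tsum_mul_inner_smul_add_tsum_one_sub_mul_inner_smul (e : HilbertBasis ι 𝕜 E)
    {a : ι → 𝕜} (ha : Memℓp a ∞) (f : E) :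
    ∑' i, (a i * ⟪e i, f⟫_𝕜) • e i + ∑' i, ((1 - a i) * ⟪e i, f⟫_𝕜) • e i = f := by
  have h1a : Memℓp (fun i => 1 - a i) ∞ := one_memℓp_infty.sub ha
  rw [← (e.summable_mul_inner_smul ha f).tsum_add (e.summable_mul_inner_smul h1a f)]
  simpa [← add_smul, ← add_mul, ← e.repr_apply_apply] using (e.hasSum_repr f).tsum_eq

end HilbertBasis

theorem stmt_18_general
    {H : Type*} [NormedAddCommGroup H] [InnerProductSpace ℂ H]
    (e : HilbertBasis ℕ ℂ H)
    (φ : ℕ → H) (m : ℕ → ℂ)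
    (hφ : ∀ n : ℕ, φ (2 * n) = e n ∧ φ (2 * n + 1) = e n)
    (hm : ∀ n : ℕ, m (2 * n) = 1 / ((n : ℂ) + 2) ∧ m (2 * n + 1) = 1 - 1 / ((n : ℂ) + 2)) :
    ∀ f : H,
      Summable (fun j : ℕ => (m j * (inner ℂ (φ j) f : ℂ)) • φ j) ∧
      (∑' j : ℕ, (m j * (inner ℂ (φ j) f : ℂ)) • φ j) = f := by
  intro f
  have ha : Memℓp (fun n : ℕ => 1 / ((n : ℂ) + 2)) ∞ := by
    refine memℓp_infty ⟨1, Set.forall_mem_range.2 fun n => ?_⟩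
    rw [norm_div, norm_one]
    exact div_le_one_of_le₀ (by norm_cast; simp) (norm_nonneg _)
  have h1a : Memℓp (fun n : ℕ => 1 - 1 / ((n : ℂ) + 2)) ∞ := one_memℓp_infty.sub ha
  have hsum : HasSum (fun j => (m j * inner ℂ (φ j) f) • φ j) f := by
    have hsplit := HasSum.even_add_odd (f := fun j => (m j * inner ℂ (φ j) f) • φ j)
      (by simpa only [(hφ _).1, (hm _).1] using (e.summable_mul_inner_smul ha f).hasSum)
      (by simpa only [(hφ _).2, (hm _).2] using (e.summable_mul_inner_smul h1a f).hasSum)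
    rwa [e.tsum_mul_inner_smul_add_tsum_one_sub_mul_inner_smul ha f] at hsplit
  exact ⟨hsum.summable, hsum.tsum_eq⟩

/-- With φ(2n) = φ(2n+1) = e_n and m(2n) = 1/(n+2), m(2n+1) = 1 − 1/(n+2),
the multiplier M_{m,Φ,Φ} is unconditionally convergent on H and equals the identity. -/
theorem stmt_18
    {H : Type*} [NormedAddCommGroup H] [InnerProductSpace ℂ H] [CompleteSpace H]
    (e : HilbertBasis ℕ ℂ H)
    (φ : ℕ → H) (m : ℕ → ℂ)
    (hφ : ∀ n : ℕ, φ (2 * n) = e n ∧ φ (2 * n + 1) = e n)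
    (hm : ∀ n : ℕ, m (2 * n) = 1 / ((n : ℂ) + 2) ∧ m (2 * n + 1) = 1 - 1 / ((n : ℂ) + 2)) :
    ∀ f : H,
      Summable (fun j : ℕ => (m j * (inner ℂ (φ j) f : ℂ)) • φ j) ∧
      (∑' j : ℕ, (m j * (inner ℂ (φ j) f : ℂ)) • φ j) = f :=
  stmt_18_general e φ m hφ hm
end
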